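/- arXiv:1706.06503 — 9 statements merged into one kernel-verified Lean document; each statement's English description precedes it below -/
import Mathlib

section
/- Let Λ be a finite-dimensional algebra and M a module that is not Schurian (i.e., has an endomorphism that is neither zero nor an isomorphism). Then there exists a proper nonzero submodule M' ⊊ M with D(M) ⊆ D(M'), and the stable set int D(M) = {x | x · dim M = 0, x · dim M' < 0 for all proper nonzero submodules M'} is empty. -/
/-- If `M` is a (finite-dimensional) module over a finite-dimensional
algebra `Λ` that is not Schurian, i.e. it has an endomorphism that is neither zero
nor an isomorphism, then there is a proper nonzero submodule `M' ⊊ M` with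
`D(M) ⊆ D(M')`, and the stable set `int D(M)` is empty.

Here `dimVec` assigns to each submodule its dimension vector; the hypotheses
`hadd` (additivity of dimension vectors along the kernel/image of an endomorphism),
`hinj`, `hsurj` (an injective, resp. surjective, endomorphism of the
finite-dimensional module `M` is bijective) record standard facts about
finite-dimensional modules.  For a submodule `N`,
`D(N) = {x | x · dim N = 0, x · dim N' ≤ 0 for all N' ⊆ N}` and
`int D(M) = {x | x · dim M = 0, x · dim M' < 0 for all proper nonzero M' ⊆ M}`. -/
theorem stmt_1 (n : ℕ) (Λ : Type) [Ring Λ]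
    (M : Type) [AddCommGroup M] [Module Λ M]
    (dimVec : Submodule Λ M → (Fin n → ℤ))
    (hadd : ∀ f : M →ₗ[Λ] M, ∀ i,
      dimVec (LinearMap.ker f) i + dimVec (LinearMap.range f) i = dimVec ⊤ i)
    (hinj : ∀ f : M →ₗ[Λ] M, Function.Injective f → Function.Bijective f)
    (hsurj : ∀ f : M →ₗ[Λ] M, Function.Surjective f → Function.Bijective f)
    (hnotSchur : ∃ f : M →ₗ[Λ] M, f ≠ 0 ∧ ¬ Function.Bijective f) :
    (∃ M' : Submodule Λ M, M' ≠ ⊥ ∧ M' ≠ ⊤ ∧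
      {x : Fin n → ℝ |
          (∑ i, x i * (dimVec ⊤ i : ℝ)) = 0 ∧
          ∀ N : Submodule Λ M, (∑ i, x i * (dimVec N i : ℝ)) ≤ 0} ⊆
      {x : Fin n → ℝ |
          (∑ i, x i * (dimVec M' i : ℝ)) = 0 ∧
          ∀ N : Submodule Λ M, N ≤ M' → (∑ i, x i * (dimVec N i : ℝ)) ≤ 0}) ∧
    {x : Fin n → ℝ |
        (∑ i, x i * (dimVec ⊤ i : ℝ)) = 0 ∧
        ∀ N : Submodule Λ M, N ≠ ⊥ → N ≠ ⊤ →
          (∑ i, x i * (dimVec N i : ℝ)) < 0} = ∅ := by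
  obtain ⟨f, hf0, hfb⟩ := hnotSchur
  have hKne : LinearMap.ker f ≠ ⊥ := fun h => hfb (hinj f (LinearMap.ker_eq_bot.mp h))
  have hRne : LinearMap.range f ≠ ⊤ := fun h => hfb (hsurj f (LinearMap.range_eq_top.mp h))
  have hKnt : LinearMap.ker f ≠ ⊤ := fun h => hf0 (LinearMap.ker_eq_top.mp h)
  have hRnb : LinearMap.range f ≠ ⊥ := fun h => hf0 (LinearMap.range_eq_bot.mp h)
  have hsum : ∀ x : Fin n → ℝ,
      (∑ i, x i * (dimVec (LinearMap.ker f) i : ℝ)) +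
        (∑ i, x i * (dimVec (LinearMap.range f) i : ℝ)) =
      ∑ i, x i * (dimVec ⊤ i : ℝ) := by
    intro x
    rw [← Finset.sum_add_distrib]
    refine Finset.sum_congr rfl fun i _ => ?_
    rw [← mul_add, ← Int.cast_add, hadd f i]
  refine ⟨⟨LinearMap.ker f, hKne, hKnt, ?_⟩, ?_⟩
  · rintro x ⟨hx0, hxle⟩
    have hK := hxle (LinearMap.ker f)
    have hR := hxle (LinearMap.range f)
    have := hsum x
    exact ⟨by linarith, fun N _ => hxle N⟩
  · ext x
    simp only [Set.mem_setOf_eq, Set.mem_empty_iff_false, iff_false, not_and]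
    rintro hx0 hxlt
    have hK := hxlt _ hKne hKnt
    have hR := hxlt _ hRnb hRne
    have := hsum x
    linarith
end

section
/- Let C be a full subcategory of Λ-mod of the form C = X^⊥ ∩ ^⊥Y for modules X, Y with Hom_Λ(X,Y) = 0, where C is closed under images of endomorphisms. If C contains a nonzero object, then C contains a Schurian object (an object whose endomorphism ring is a division ring). -/
/-- An object of the full subcategory `C = X^⊥ ∩ ^⊥Y` of `Λ-mod`:
a nonzero finite-length `Λ`-module `M` with `Hom_Λ(X, M) = 0` and
`Hom_Λ(M, Y) = 0`. -/
structure OrthObject (Λ : Type) [Ring Λ]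
    (X Y : Type) [AddCommGroup X] [Module Λ X] [AddCommGroup Y] [Module Λ Y] where
  carrier : Type
  [isAddCommGroup : AddCommGroup carrier]
  [isModule : Module Λ carrier]
  finLength : IsFiniteLength Λ carrier
  nontrivial : Nontrivial carrier
  homXvanish : ∀ f : X →ₗ[Λ] carrier, f = 0
  homYvanish : ∀ f : carrier →ₗ[Λ] Y, f = 0

attribute [instance] OrthObject.isAddCommGroup OrthObject.isModule

/-- Let `C = X^⊥ ∩ ^⊥Y` with `Hom_Λ(X,Y) = 0` (a full subcategory of
`Λ-mod` closed under images of endomorphisms).  If `C` contains a nonzero object,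
then `C` contains a Schurian object, i.e. one whose endomorphism ring is a division
ring (every nonzero endomorphism is invertible). -/
theorem stmt_2 (Λ : Type) [Ring Λ]
    (X Y : Type) [AddCommGroup X] [Module Λ X] [AddCommGroup Y] [Module Λ Y]
    (hXY : ∀ f : X →ₗ[Λ] Y, f = 0)
    (hC : Nonempty (OrthObject Λ X Y)) :
    ∃ M : OrthObject Λ X Y,
      ∀ f : M.carrier →ₗ[Λ] M.carrier, f = 0 ∨ Function.Bijective f := by
  obtain ⟨M0⟩ := hC
  obtain ⟨hNoeth, hArt⟩ := isFiniteLength_iff_isNoetherian_isArtinian.mp M0.finLength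
  -- the set of nonzero submodules of M0 with no nonzero maps to Y
  set S : Set (Submodule Λ M0.carrier) :=
    {N | Nontrivial N ∧ ∀ g : N →ₗ[Λ] Y, g = 0} with hS
  have hTop : (⊤ : Submodule Λ M0.carrier) ∈ S := by
    constructor
    · haveI := M0.nontrivial
      exact Submodule.nontrivial_iff_ne_bot.mpr bot_ne_top.symm
    · intro g
      have h0 := M0.homYvanish (g.comp
        (Submodule.topEquiv (R := Λ) (M := M0.carrier)).symm.toLinearMap)
      ext x
      have hx : (Submodule.topEquiv (R := Λ) (M := M0.carrier)).symm (x : M0.carrier) = x :=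
        Subtype.ext rfl
      have h1 := LinearMap.congr_fun h0 (x : M0.carrier)
      simp only [LinearMap.comp_apply, LinearMap.zero_apply, LinearEquiv.coe_coe, hx] at h1
      simpa using h1
  obtain ⟨N, hN, hmin⟩ := (wellFounded_lt (α := Submodule Λ M0.carrier)).has_min S ⟨⊤, hTop⟩
  haveI : Nontrivial N := hN.1
  haveI : IsNoetherian Λ N := inferInstance
  haveI : IsArtinian Λ N := inferInstance
  refine ⟨⟨N, isFiniteLength_iff_isNoetherian_isArtinian.mpr ⟨inferInstance, inferInstance⟩,
    hN.1, ?_, hN.2⟩, ?_⟩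
  · -- Hom(X, N) = 0
    intro f
    ext x
    rw [LinearMap.zero_apply]
    have h2 : ((f x : N) : M0.carrier) = 0 := by
      simpa using LinearMap.congr_fun (M0.homXvanish (N.subtype.comp f)) x
    rw [h2]; rfl
  · -- every nonzero endomorphism is bijective
    intro f
    rcases eq_or_ne f 0 with rfl | hf
    · exact Or.inl rfl
    right
    -- P = image of f, viewed as a submodule of M0
    set P : Submodule Λ M0.carrier := (LinearMap.range f).map N.subtype with hP
    have hPle : P ≤ N := by
      rintro x ⟨y, _, rfl⟩; exact y.2
    -- the surjection N → P
    have hmem : ∀ n : N, (f n : M0.carrier) ∈ P := fun n => ⟨f n, ⟨n, rfl⟩, rfl⟩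
    set h : N →ₗ[Λ] P := (N.subtype.comp f).codRestrict P hmem with hh
    have hsurj : Function.Surjective h := by
      rintro ⟨x, y, ⟨n, rfl⟩, rfl⟩
      exact ⟨n, rfl⟩
    have hPS : P ∈ S := by
      constructor
      · rw [Submodule.nontrivial_iff_ne_bot]
        intro hbot
        apply hf
        ext n
        have : (f n : M0.carrier) ∈ P := hmem n
        rw [hbot, Submodule.mem_bot] at this
        simpa using Subtype.ext this
      · intro g
        have h0 : g.comp h = 0 := hN.2 (g.comp h)
        ext p
        obtain ⟨n, rfl⟩ := hsurj p
        have : (g.comp h) n = 0 := by rw [h0]; rfl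
        simpa using this
    have hPN : P = N := by
      by_contra hne
      exact hmin P hPS (lt_of_le_of_ne hPle hne)
    -- hence f is surjective
    have hrange : LinearMap.range f = ⊤ := by
      apply Submodule.map_injective_of_injective N.injective_subtype
      rw [← hP, hPN, Submodule.map_top, Submodule.range_subtype]
    have hfsurj : Function.Surjective f := LinearMap.range_eq_top.mp hrange
    exact ⟨IsNoetherian.injective_of_surjective_endomorphism f hfsurj, hfsurj⟩
end

section
/- Let Λ be a finite-dimensional algebra, X and Y modules with Hom_Λ(X,Y) = 0, and let C = X^⊥ ∩ ^⊥Y. Let G(X) = ^⊥(X^⊥) be the torsion class generated by X. Then G(X) = ^⊥C ∩ ^⊥Y. -/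
open ModuleCat

variable (Λ : Type) [Ring Λ]

/-- The right hom-perpendicular class `X^⊥ = {N : Hom_Λ(X,N) = 0}` of a module. -/
def rightPerp (X : ModuleCat.{0} Λ) : Set (ModuleCat.{0} Λ) :=
  {N | ∀ f : X ⟶ N, f = 0}

/-- The left hom-perpendicular class `^⊥S = {M : Hom_Λ(M,N) = 0 for all N ∈ S}`
of a class of modules. -/
def leftPerp (S : Set (ModuleCat.{0} Λ)) : Set (ModuleCat.{0} Λ) :=
  {M | ∀ N ∈ S, ∀ f : M ⟶ N, f = 0}

/-! For `M ∈ ^⊥C ∩ ^⊥Y`, the quotient `M ⧸ rM` lies in `X^⊥`, and in `^⊥Y` as a quotient of `M`;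
so it lies in `C`, the projection `M → M ⧸ rM` vanishes, `rM = M` and `M ∈ G(X)`.
The other inclusion holds because `C ⊆ X^⊥` and `Y ∈ X^⊥`. -/

open CategoryTheory Limits

section

variable {Λ}

theorem leftPerp_antitone {S T : Set (ModuleCat.{0} Λ)} (hST : S ⊆ T) :
    leftPerp Λ T ⊆ leftPerp Λ S :=
  fun _ hM N hN => hM N (hST hN)

theorem mem_leftPerp_of_epi {S : Set (ModuleCat.{0} Λ)} {A M : ModuleCat.{0} Λ} (e : A ⟶ M)
    [Epi e] (hA : A ∈ leftPerp Λ S) : M ∈ leftPerp Λ S :=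
  fun N hN _ => zero_of_epi_comp e (hA N hN _)

end

universe v in
theorem Submodule.epi_ofHom_subtype_of_ofHom_mkQ_eq_zero {R : Type*} [Ring R] {M : ModuleCat.{v} R}
    {p : Submodule R M} (h : ofHom p.mkQ = 0) : Epi (ofHom p.subtype) := by
  rw [ModuleCat.epi_iff_range_eq_top, hom_ofHom, p.range_subtype, ← p.ker_mkQ,
    ← hom_ofHom p.mkQ, h, hom_zero, LinearMap.ker_zero]

/-- Let `X`, `Y` be `Λ`-modules with `Hom_Λ(X,Y) = 0`, let
`C = X^⊥ ∩ ^⊥Y`, and let `G(X) = ^⊥(X^⊥)` be the torsion class generated by `X`.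
Assuming the torsion-pair property (every module `M` has a canonical submodule
`rM ∈ G(X)` with `M/rM ∈ X^⊥`), we have `G(X) = ^⊥C ∩ ^⊥Y`. -/
theorem stmt_3 (X Y : ModuleCat.{0} Λ)
    (hXY : ∀ f : X ⟶ Y, f = 0)
    (htorsion : ∀ M : ModuleCat.{0} Λ, ∃ r : Submodule Λ M,
      ModuleCat.of Λ r ∈ leftPerp Λ (rightPerp Λ X) ∧
      ModuleCat.of Λ (M ⧸ r) ∈ rightPerp Λ X) :
    leftPerp Λ (rightPerp Λ X) =
      leftPerp Λ (rightPerp Λ X ∩ {M | ∀ f : M ⟶ Y, f = 0}) ∩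
      {M | ∀ f : M ⟶ Y, f = 0} := by
  ext M
  constructor
  · intro hM
    exact ⟨leftPerp_antitone Set.inter_subset_left hM, hM Y hXY⟩
  · rintro ⟨hMC, hMY⟩
    obtain ⟨r, hr, hquotX⟩ := htorsion M
    have hquotY : ∀ g : ModuleCat.of Λ (M ⧸ r) ⟶ Y, g = 0 :=
      fun g => zero_of_epi_comp (ofHom r.mkQ) (hMY _)
    have hmkQ : ofHom r.mkQ = 0 := hMC _ ⟨hquotX, hquotY⟩ _
    have := Submodule.epi_ofHom_subtype_of_ofHom_mkQ_eq_zero hmkQ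
    exact mem_leftPerp_of_epi (ofHom r.subtype) hr
end

section
/- If M_1, ..., M_m is a forward hom-orthogonal sequence of Schurian Λ-modules, then for any k < m the truncated sequence M_1, ..., M_k is also forward hom-orthogonal. -/
variable (Λ : Type) [Ring Λ]

/-- A module is Schurian if its endomorphism ring is a division ring:
it is nonzero and every nonzero endomorphism is invertible. -/
def Schurian (M : ModuleCat.{0} Λ) : Prop :=
  Nontrivial M ∧ ∀ f : M ⟶ M, f = 0 ∨ Function.Bijective f

/-- The torsion class `G(M) = ^⊥(M^⊥)` generated by `M` inside the category
of finite-length `Λ`-modules. -/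
def torsionClassOf (M : ModuleCat.{0} Λ) : Set (ModuleCat.{0} Λ) :=
  {N | ∀ P : ModuleCat.{0} Λ, IsFiniteLength Λ P →
    (∀ f : M ⟶ P, f = 0) → ∀ g : N ⟶ P, g = 0}

/-- `X` can be inserted into the sequence `M` at position `k` (after the first `k`
terms) preserving forward hom-orthogonality. -/
def Insertable {m : ℕ} (M : Fin m → ModuleCat.{0} Λ) (X : ModuleCat.{0} Λ)
    (k : ℕ) : Prop :=
  ∀ i : Fin m, ((i : ℕ) < k → ∀ f : M i ⟶ X, f = 0) ∧
    (k ≤ (i : ℕ) → ∀ f : X ⟶ M i, f = 0)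

/-- A forward hom-orthogonal sequence: a sequence of Schurian (finite-length)
modules `M_1, ..., M_m` with `Hom(M_i, M_j) = 0` for `i < j`, such that no
Schurian module `X` lying in the torsion class `G(M_1 ⊕ ⋯ ⊕ M_m)` can be
inserted anywhere into the sequence preserving condition (1). -/
def ForwardHomOrthogonal (m : ℕ) (M : Fin m → ModuleCat.{0} Λ) : Prop :=
  (∀ i, IsFiniteLength Λ (M i)) ∧ (∀ i, Schurian Λ (M i)) ∧
  (∀ i j : Fin m, i < j → ∀ f : M i ⟶ M j, f = 0) ∧
  ¬ ∃ X : ModuleCat.{0} Λ, IsFiniteLength Λ X ∧ Schurian Λ X ∧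
      X ∈ torsionClassOf Λ (ModuleCat.of Λ (∀ i, M i)) ∧
      ∃ k ≤ m, Insertable Λ M X k

variable {Λ}

lemma pi_hom_eq_zero_iff {ι : Type} [Finite ι] [DecidableEq ι] (N : ι → ModuleCat.{0} Λ)
    (P : ModuleCat.{0} Λ) :
    (∀ g : ModuleCat.of Λ (∀ i, N i) ⟶ P, g = 0) ↔ ∀ i, ∀ f : N i ⟶ P, f = 0 := by
  constructor
  · intro h i f
    have hproj := h (ModuleCat.ofHom (f.hom ∘ₗ LinearMap.proj i))
    ext x
    simpa using LinearMap.congr_fun (congrArg ModuleCat.Hom.hom hproj) (Pi.single i x)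
  · intro h g
    ext1
    refine LinearMap.pi_ext fun i x => ?_
    have hsingle := h i (ModuleCat.ofHom (g.hom ∘ₗ LinearMap.single Λ (fun i => N i) i))
    simpa using LinearMap.congr_fun (congrArg ModuleCat.Hom.hom hsingle) x

lemma mem_torsionClassOf_pi_iff {ι : Type} [Finite ι] [DecidableEq ι]
    (N : ι → ModuleCat.{0} Λ) (X : ModuleCat.{0} Λ) :
    X ∈ torsionClassOf Λ (ModuleCat.of Λ (∀ i, N i)) ↔
      ∀ P : ModuleCat.{0} Λ, IsFiniteLength Λ P →
        (∀ i, ∀ f : N i ⟶ P, f = 0) → ∀ g : X ⟶ P, g = 0 := by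
  simp only [torsionClassOf, Set.mem_ofPred_eq, pi_hom_eq_zero_iff]

lemma torsionClassOf_pi_comp_subset {ι κ : Type} [Finite ι] [DecidableEq ι] [Finite κ]
    [DecidableEq κ] (N : ι → ModuleCat.{0} Λ) (e : κ → ι) :
    torsionClassOf Λ (ModuleCat.of Λ (∀ l, N (e l))) ⊆
      torsionClassOf Λ (ModuleCat.of Λ (∀ i, N i)) := by
  intro X hX
  rw [mem_torsionClassOf_pi_iff] at hX ⊢
  exact fun P hP hN => hX P hP fun l => hN (e l)

lemma Insertable.of_castLE {m k j : ℕ} (hk : k ≤ m) {M : Fin m → ModuleCat.{0} Λ}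
    {X : ModuleCat.{0} Λ} (hX : Insertable Λ (fun i => M (Fin.castLE hk i)) X j)
    (hj : j ≤ k) (htail : ∀ i : Fin m, k ≤ (i : ℕ) → ∀ f : X ⟶ M i, f = 0) :
    Insertable Λ M X j := by
  intro i
  refine ⟨fun hij => (hX ⟨i, by omega⟩).1 hij, fun hji => ?_⟩
  by_cases hik : (i : ℕ) < k
  · exact (hX ⟨i, hik⟩).2 hji
  · exact htail i (not_lt.mp hik)

/-- If `M_1, ..., M_m` is a forward hom-orthogonal sequence of
Schurian `Λ`-modules, then so is the truncation `M_1, ..., M_k` for any `k < m`. -/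
theorem stmt_4 (m : ℕ) (M : Fin m → ModuleCat.{0} Λ)
    (hM : ForwardHomOrthogonal Λ m M) (k : ℕ) (hk : k < m) :
    ForwardHomOrthogonal Λ k (fun i => M (Fin.castLE hk.le i)) := by
  obtain ⟨hfl, hsch, horth, hmax⟩ := hM
  refine ⟨fun i => hfl _, fun i => hsch _, fun i j hij => horth _ _ hij, ?_⟩
  rintro ⟨X, hXfl, hXs, hXt, j, hjk, hIns⟩
  -- `X` lies in `G(M_1 ⊕ ⋯ ⊕ M_k)`, and every `M_l` with `l < k` maps trivially to `M_i`
  -- for `i ≥ k`, so `X` does too.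
  have htail : ∀ i : Fin m, k ≤ (i : ℕ) → ∀ f : X ⟶ M i, f = 0 := fun i hi =>
    (mem_torsionClassOf_pi_iff _ X).mp hXt (M i) (hfl i) fun l =>
      horth _ i (Fin.lt_def.mpr (lt_of_lt_of_le l.isLt hi))
  exact hmax ⟨X, hXfl, hXs, torsionClassOf_pi_comp_subset M (Fin.castLE hk.le) hXt, j,
    hjk.trans hk.le, hIns.of_castLE hk.le hjk htail⟩
end

section
/- Let M_1, ..., M_m be a forward hom-orthogonal sequence of Schurian Λ-modules such that no M_i is isomorphic to the simple module S_j. Then Hom_Λ(M_i, S_j) = 0 for all i. -/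
/-!
Suppose some `M_i` maps nonzero to `S` and let `k` be the least such index. Then `S` can be
inserted after the first `k` terms: nothing before `k` maps to `S` by minimality, and a nonzero
`g : S ⟶ M_i` with `i ≥ k` composes with the epimorphism `M_k ↠ S` to a nonzero map
`M_k ⟶ M_i`, which forward orthogonality rules out for `i > k`, and which for `i = k` is an
automorphism of the Schurian module `M_k`, forcing `M_k ≅ S`. Since `S` is Schurian, of finite
length and a quotient of `⊕ M_i`, this contradicts maximality.
-/

variable (Λ : Type) [Ring Λ]

open CategoryTheory

variable {Λ}

lemma IsSimpleModule.isFiniteLength {R M : Type*} [Ring R] [AddCommGroup M] [Module R M]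
    [IsSimpleModule R M] : IsFiniteLength R M :=
  open scoped IsSimpleOrder in
  isFiniteLength_iff_isNoetherian_isArtinian.mpr ⟨inferInstance, inferInstance⟩

lemma surjective_of_ne_zero_to_simple {X S : ModuleCat.{0} Λ} [IsSimpleModule Λ S]
    {f : X ⟶ S} (hf : f ≠ 0) : Function.Surjective f :=
  f.hom.surjective_or_eq_zero.resolve_right fun h => hf (ModuleCat.hom_ext h)

lemma injective_of_ne_zero_from_simple {S Y : ModuleCat.{0} Λ} [IsSimpleModule Λ S]
    {g : S ⟶ Y} (hg : g ≠ 0) : Function.Injective g :=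
  g.hom.injective_or_eq_zero.resolve_right fun h => hg (ModuleCat.hom_ext h)

lemma comp_ne_zero_of_isSimpleModule {X S Y : ModuleCat.{0} Λ} [IsSimpleModule Λ S]
    {f : X ⟶ S} {g : S ⟶ Y} (hf : f ≠ 0) (hg : g ≠ 0) : f ≫ g ≠ 0 := by
  intro hfg
  apply hg
  ext s
  obtain ⟨x, rfl⟩ := surjective_of_ne_zero_to_simple hf s
  simpa using congr($hfg x)

lemma schurian_of_isSimpleModule (S : ModuleCat.{0} Λ) [IsSimpleModule Λ S] : Schurian Λ S :=
  ⟨IsSimpleModule.nontrivial Λ S, fun f =>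
    (eq_or_ne f 0).imp_right fun hf => f.hom.bijective_or_eq_zero.resolve_right
      fun h => hf (ModuleCat.hom_ext h)⟩

lemma Schurian.nonempty_iso_of_ne_zero {X S : ModuleCat.{0} Λ} (hX : Schurian Λ X)
    [IsSimpleModule Λ S] {f : X ⟶ S} {g : S ⟶ X} (hf : f ≠ 0) (hg : g ≠ 0) :
    Nonempty (X ≅ S) := by
  obtain ⟨-, hEnd⟩ := hX
  have hbij : Function.Bijective (f ≫ g) :=
    (hEnd (f ≫ g)).resolve_left (comp_ne_zero_of_isSimpleModule hf hg)
  have hsurj : Function.Surjective g := fun y => by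
    obtain ⟨x, hx⟩ := hbij.2 y
    exact ⟨f x, by simpa using hx⟩
  exact ⟨(LinearEquiv.ofBijective g.hom
    ⟨injective_of_ne_zero_from_simple hg, hsurj⟩).toModuleIso.symm⟩

lemma mem_torsionClassOf_of_surjective {X N : ModuleCat.{0} Λ} (f : X ⟶ N)
    (hf : Function.Surjective f) : N ∈ torsionClassOf Λ X := by
  intro P _ hX g
  ext n
  obtain ⟨x, rfl⟩ := hf n
  simpa using congr($(hX (f ≫ g)) x)

lemma insertable_at_first_hom_ne_zero {m : ℕ} {M : Fin m → ModuleCat.{0} Λ}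
    (hSch : ∀ i, Schurian Λ (M i)) (hFwd : ∀ i j : Fin m, i < j → ∀ f : M i ⟶ M j, f = 0)
    {S : ModuleCat.{0} Λ} [IsSimpleModule Λ S] {k : Fin m} {f : M k ⟶ S} (hf : f ≠ 0)
    (hmin : ∀ i < k, ∀ f : M i ⟶ S, f = 0) (hnotiso : ¬ Nonempty (M k ≅ S)) :
    Insertable Λ M S k := by
  refine fun i => ⟨hmin i, fun hki g => ?_⟩
  by_contra hg
  rcases (show k ≤ i from hki).lt_or_eq with hlt | rfl
  · exact comp_ne_zero_of_isSimpleModule hf hg (hFwd k i hlt _)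
  · exact hnotiso ((hSch k).nonempty_iso_of_ne_zero hf hg)

/-- Let `M_1, ..., M_m` be a forward hom-orthogonal sequence of
Schurian `Λ`-modules such that no `M_i` is isomorphic to the simple module `S`.
Then `Hom_Λ(M_i, S) = 0` for all `i`. -/
theorem stmt_5 (m : ℕ) (M : Fin m → ModuleCat.{0} Λ)
    (hM : ForwardHomOrthogonal Λ m M)
    (S : ModuleCat.{0} Λ) (hS : IsSimpleModule Λ S)
    (hnotiso : ∀ i, ¬ Nonempty (M i ≅ S)) :
    ∀ i, ∀ f : M i ⟶ S, f = 0 := by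
  have := hS
  obtain ⟨-, hSch, hFwd, hMax⟩ := hM
  by_contra! ⟨i, f, hf⟩
  obtain ⟨k, ⟨f₀, hf₀⟩, hmin⟩ :=
    wellFounded_lt.has_min {j | ∃ f : M j ⟶ S, f ≠ 0} ⟨i, f, hf⟩
  let π : ModuleCat.of Λ (∀ i, M i) ⟶ M k := ModuleCat.ofHom (LinearMap.proj k)
  have hquot : S ∈ torsionClassOf Λ (ModuleCat.of Λ (∀ i, M i)) :=
    mem_torsionClassOf_of_surjective (π ≫ f₀) <|
      (surjective_of_ne_zero_to_simple hf₀).comp (LinearMap.proj_surjective (R := Λ) k)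
  have hins : Insertable Λ M S k :=
    insertable_at_first_hom_ne_zero hSch hFwd hf₀
      (fun j hj g => by_contra fun hg => hmin j ⟨g, hg⟩ hj) (hnotiso k)
  exact hMax ⟨S, IsSimpleModule.isFiniteLength, schurian_of_isSimpleModule S, hquot,
    k, k.isLt.le, hins⟩
end

section
/- A Schurian Λ-module M forms a forward hom-orthogonal sequence of length 1 if and only if M is simple. -/
variable (Λ : Type) [Ring Λ]

/-!
If `M` is not simple, it has a simple quotient `S`, which lies in `G(M)`. A nonzero map
`S ⟶ M` composed with `M ↠ S` would be a nonzero, hence invertible, endomorphism of the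
Schurian `M`, forcing `M ≅ S`; so `Hom(S, M) = 0` and `S` can be inserted before `M`.

If `M` is simple, a nonzero finite-length `X ∈ G(M)` receives a nonzero map from `M`
(test the torsion class against `P = X`), and maps nonzero to `M`: some simple quotient `S`
of `X` receives a nonzero map from `M`, which is an isomorphism by Schur's lemma. So `X`
can be inserted neither after nor before `M`.
-/

open CategoryTheory CategoryTheory.Limits

section

variable {Λ}

lemma ModuleCat.id_ne_zero (X : ModuleCat.{0} Λ) [Nontrivial X] : 𝟙 X ≠ 0 := fun h =>
  not_subsingleton X (ModuleCat.isZero_iff_subsingleton.1 ((IsZero.iff_id_eq_zero X).2 h))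

lemma ModuleCat.isFiniteLength_of_simple (S : ModuleCat.{0} Λ) [Simple S] : IsFiniteLength Λ S :=
  isFiniteLength_iff_isNoetherian_isArtinian.2 ⟨inferInstance, inferInstance⟩

lemma IsFiniteLength.exists_epi_simple {X : ModuleCat.{0} Λ} [Nontrivial X]
    (h : IsFiniteLength Λ X) : ∃ (S : ModuleCat.{0} Λ) (p : X ⟶ S), Epi p ∧ Simple S := by
  cases h with
  | of_subsingleton => exact (not_subsingleton X ‹_›).elim
  | @of_simple_quotient _ _ _ N _ _ =>
    exact ⟨.of Λ (X ⧸ N), ModuleCat.ofHom N.mkQ,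
      (ModuleCat.epi_iff_surjective _).2 N.mkQ_surjective, simple_of_isSimpleModule⟩

lemma Schurian.of_simple (M : ModuleCat.{0} Λ) [Simple M] : Schurian Λ M :=
  ⟨not_subsingleton_iff_nontrivial.1 (ModuleCat.isZero_iff_subsingleton.not.1
      (Simple.not_isZero M)),
    fun f => or_iff_not_imp_left.2 fun hf =>
      (ConcreteCategory.isIso_iff_bijective f).1 (isIso_of_hom_simple hf)⟩

lemma Schurian.isIso_of_ne_zero {M : ModuleCat.{0} Λ} (hM : Schurian Λ M) {f : M ⟶ M}
    (hf : f ≠ 0) : IsIso f :=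
  (ConcreteCategory.isIso_iff_bijective f).2 ((hM.2 f).resolve_left hf)

lemma Schurian.isIso_of_epi_of_ne_zero {M N : ModuleCat.{0} Λ} (hM : Schurian Λ M)
    (p : M ⟶ N) [Epi p] {f : N ⟶ M} (hf : f ≠ 0) : IsIso p := by
  have : IsIso (p ≫ f) := hM.isIso_of_ne_zero fun h => hf ((cancel_epi p).1 (by simpa using h))
  have : Mono p := mono_of_mono p f
  exact isIso_of_mono_of_epi p

lemma mem_torsionClassOf_self (M : ModuleCat.{0} Λ) : M ∈ torsionClassOf Λ M :=
  fun _ _ h => h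

lemma torsionClassOf_subset_of_epi {M N : ModuleCat.{0} Λ} (p : M ⟶ N) [Epi p] :
    torsionClassOf Λ N ⊆ torsionClassOf Λ M :=
  fun _ hX P hP hM => hX P hP fun g => (cancel_epi p).1 (by rw [hM (p ≫ g), comp_zero])

lemma torsionClassOf_eq_of_iso {M N : ModuleCat.{0} Λ} (e : M ≅ N) :
    torsionClassOf Λ M = torsionClassOf Λ N :=
  (torsionClassOf_subset_of_epi e.inv).antisymm (torsionClassOf_subset_of_epi e.hom)

lemma torsionClassOf_pi_unique (ι : Type) [Unique ι] (M : ModuleCat.{0} Λ) :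
    torsionClassOf Λ (.of Λ (ι → M)) = torsionClassOf Λ M :=
  torsionClassOf_eq_of_iso (LinearEquiv.funUnique ι Λ M).toModuleIso

lemma exists_ne_zero_of_mem_torsionClassOf {M X P : ModuleCat.{0} Λ}
    (hX : X ∈ torsionClassOf Λ M) (hP : IsFiniteLength Λ P) {g : X ⟶ P} (hg : g ≠ 0) :
    ∃ f : M ⟶ P, f ≠ 0 := by
  by_contra! h
  exact hg (hX P hP h g)

lemma exists_ne_zero_to_simple_of_mem_torsionClassOf {M X : ModuleCat.{0} Λ} [Simple M]
    [Nontrivial X] (hX : X ∈ torsionClassOf Λ M) (hFL : IsFiniteLength Λ X) :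
    ∃ g : X ⟶ M, g ≠ 0 := by
  obtain ⟨S, p, _, _⟩ := hFL.exists_epi_simple
  have hp : p ≠ 0 := by
    rintro rfl
    exact Simple.not_isZero S (IsZero.of_epi_zero X S)
  obtain ⟨f, hf⟩ := exists_ne_zero_of_mem_torsionClassOf hX S.isFiniteLength_of_simple hp
  have := isIso_of_hom_simple hf
  exact ⟨p ≫ inv f, fun h => hp ((cancel_mono (inv f)).1 (by simpa using h))⟩

lemma insertable_zero_iff {m : ℕ} (M : Fin m → ModuleCat.{0} Λ) (X : ModuleCat.{0} Λ) :
    Insertable Λ M X 0 ↔ ∀ i, ∀ f : X ⟶ M i, f = 0 := by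
  simp [Insertable]

lemma insertable_length_iff {m : ℕ} (M : Fin m → ModuleCat.{0} Λ) (X : ModuleCat.{0} Λ) :
    Insertable Λ M X m ↔ ∀ i, ∀ f : M i ⟶ X, f = 0 := by
  simp [Insertable]

lemma forwardHomOrthogonal_single_of_simple (M : ModuleCat.{0} Λ) [Simple M] :
    ForwardHomOrthogonal Λ 1 (fun _ => M) := by
  refine ⟨fun _ => M.isFiniteLength_of_simple, fun _ => .of_simple M,
    fun i j hij => absurd hij (Subsingleton.elim i j ▸ lt_irrefl j), ?_⟩
  rintro ⟨X, hXFL, ⟨_, -⟩, hX, k, hk, hins⟩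
  rw [torsionClassOf_pi_unique] at hX
  interval_cases k
  · obtain ⟨g, hg⟩ := exists_ne_zero_to_simple_of_mem_torsionClassOf hX hXFL
    exact hg ((insertable_zero_iff _ X).1 hins 0 g)
  · obtain ⟨f, hf⟩ := exists_ne_zero_of_mem_torsionClassOf hX hXFL (ModuleCat.id_ne_zero X)
    exact hf ((insertable_length_iff _ X).1 hins 0 f)

end

/-- A Schurian (finite-length) `Λ`-module `M` forms a forward
hom-orthogonal sequence of length 1 if and only if `M` is simple. -/
theorem stmt_6 (M : ModuleCat.{0} Λ) (hFL : IsFiniteLength Λ M)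
    (hSchur : Schurian Λ M) :
    ForwardHomOrthogonal Λ 1 (fun _ => M) ↔ IsSimpleModule Λ M := by
  rw [← simple_iff_isSimpleModule']
  refine ⟨fun ⟨_, _, _, hmax⟩ => ?_, fun _ => forwardHomOrthogonal_single_of_simple M⟩
  by_contra hM
  have : Nontrivial M := hSchur.1
  obtain ⟨S, p, _, _⟩ := hFL.exists_epi_simple
  have hSM : ∀ f : S ⟶ M, f = 0 := fun f => by
    by_contra hf
    have := hSchur.isIso_of_epi_of_ne_zero p hf
    exact hM (Simple.of_iso (asIso p))
  refine hmax ⟨S, S.isFiniteLength_of_simple, .of_simple S, ?_, 0, zero_le_one,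
    (insertable_zero_iff _ S).2 fun _ => hSM⟩
  rw [torsionClassOf_pi_unique]
  exact torsionClassOf_subset_of_epi p (mem_torsionClassOf_self S)
end

section
/- For the simple module S_i of a finite-dimensional algebra Λ, the torsion class G(S_i) = ^⊥(S_i^⊥) consists exactly of modules all of whose composition factors are isomorphic to S_i (iterated self-extensions of S_i). -/
variable (Λ : Type) [Ring Λ]

/-- `N` is an iterated self-extension of `S`: every simple subquotient
(composition factor) of `N` is isomorphic to `S`. -/
def AllFactorsIso (S N : ModuleCat.{0} Λ) : Prop :=
  ∀ (B : Submodule Λ N) (A : Submodule Λ B),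
    IsSimpleModule Λ (B ⧸ A) → Nonempty ((B ⧸ A) ≃ₗ[Λ] S)

/-
If every simple subquotient of `N` is isomorphic to `S`, a nonzero map `N → P` to a finite-length
module has a simple submodule `a` of its image; `a` is a subquotient of `N`, hence a copy of `S`
inside `P`, so `N ∈ ^⊥(S^⊥)`. Conversely, the modules all of whose simple subquotients are `S` are
closed under extensions, so a maximal such submodule `t ≤ N` satisfies `Hom(S, N ⧸ t) = 0`: a
nonzero map would pull back to a strictly larger one. Hence `N ⧸ t ∈ S^⊥`, the quotient map
`N → N ⧸ t` vanishes when `N ∈ ^⊥(S^⊥)`, and `t = N`.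
-/

section Subquotients

/-- `AllFactorsIso` for arbitrary module types, with a subquotient `W ⧸ A` presented as a
surjection `W → T`; in this form closure under injections, surjections and extensions is direct. -/
def SimpleSubquotientsIso (S M : Type) [AddCommGroup S] [Module Λ S] [AddCommGroup M]
    [Module Λ M] : Prop :=
  ∀ (W : Submodule Λ M) (T : Type) [AddCommGroup T] [Module Λ T],
    IsSimpleModule Λ T → ∀ f : W →ₗ[Λ] T, Function.Surjective f → Nonempty (T ≃ₗ[Λ] S)

variable {Λ} {S M M' Q : Type} [AddCommGroup S] [Module Λ S] [AddCommGroup M] [Module Λ M]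
  [AddCommGroup M'] [Module Λ M'] [AddCommGroup Q] [Module Λ Q]

theorem allFactorsIso_iff (S N : ModuleCat.{0} Λ) :
    AllFactorsIso Λ S N ↔ SimpleSubquotientsIso Λ S N := by
  constructor
  · intro h W T _ _ hT f hf
    let e : (W ⧸ LinearMap.ker f) ≃ₗ[Λ] T := f.quotKerEquivOfSurjective hf
    obtain ⟨g⟩ := h W (LinearMap.ker f) (IsSimpleModule.congr e)
    exact ⟨e.symm.trans g⟩
  · intro h B A hA
    exact h B (B ⧸ A) hA A.mkQ A.mkQ_surjective

theorem mem_torsionClassOf_iff (M N : ModuleCat.{0} Λ) :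
    N ∈ torsionClassOf Λ M ↔ ∀ (P : Type) [AddCommGroup P] [Module Λ P],
      IsFiniteLength Λ P → (∀ f : M →ₗ[Λ] P, f = 0) → ∀ g : N →ₗ[Λ] P, g = 0 := by
  constructor
  · intro h P _ _ hP hM g
    have := h (ModuleCat.of Λ P) hP (fun f => ModuleCat.hom_ext (hM f.hom)) (ModuleCat.ofHom g)
    simpa using congrArg ModuleCat.Hom.hom this
  · intro h P hP hM g
    refine ModuleCat.hom_ext (h P hP (fun f => ?_) g.hom)
    simpa using congrArg ModuleCat.Hom.hom (hM (ModuleCat.ofHom f))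

namespace SimpleSubquotientsIso

theorem of_subsingleton [Subsingleton M] : SimpleSubquotientsIso Λ S M := by
  intro W T _ _ hT f hf
  have := IsSimpleModule.nontrivial Λ T
  exact absurd hf.subsingleton (not_subsingleton T)

theorem self (hS : IsSimpleModule Λ S) : SimpleSubquotientsIso Λ S S := by
  intro W T _ _ hT f hf
  have := IsSimpleModule.nontrivial Λ T
  rcases eq_bot_or_eq_top W with rfl | rfl
  · exact absurd hf.subsingleton (not_subsingleton T)
  · let g : S →ₗ[Λ] T := f ∘ₗ Submodule.topEquiv.symm.toLinearMap
    have hg : Function.Surjective g := hf.comp Submodule.topEquiv.symm.surjective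
    have hg0 : g ≠ 0 := by
      rintro h
      rw [← LinearMap.range_eq_top, h, LinearMap.range_zero] at hg
      exact bot_ne_top hg
    exact ⟨(LinearEquiv.ofBijective g (LinearMap.bijective_of_ne_zero hg0)).symm⟩

theorem of_injective (h : SimpleSubquotientsIso Λ S M) (g : M' →ₗ[Λ] M)
    (hg : Function.Injective g) : SimpleSubquotientsIso Λ S M' := by
  intro W T _ _ hT f hf
  let e := Submodule.equivMapOfInjective g hg W
  exact h (W.map g) T hT (f ∘ₗ e.symm.toLinearMap) (hf.comp e.symm.surjective)

theorem of_surjective (h : SimpleSubquotientsIso Λ S M) (g : M →ₗ[Λ] Q)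
    (hg : Function.Surjective g) : SimpleSubquotientsIso Λ S Q := by
  intro W T _ _ hT f hf
  refine h (W.comap g) T hT (f ∘ₗ g.restrict fun _ hx => hx) (hf.comp ?_)
  rintro ⟨w, hw⟩
  obtain ⟨x, rfl⟩ := hg w
  exact ⟨⟨x, hw⟩, rfl⟩

theorem nonempty_equiv_of_surjective (h : SimpleSubquotientsIso Λ S M) {T : Type}
    [AddCommGroup T] [Module Λ T] [IsSimpleModule Λ T] (f : M →ₗ[Λ] T)
    (hf : Function.Surjective f) : Nonempty (T ≃ₗ[Λ] S) :=
  h ⊤ T ‹_› (f ∘ₗ Submodule.topEquiv.toLinearMap) (hf.comp Submodule.topEquiv.surjective)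

theorem nonempty_equiv_of_ker_of_range (p : M →ₗ[Λ] Q)
    (hker : SimpleSubquotientsIso Λ S (LinearMap.ker p))
    (hrange : SimpleSubquotientsIso Λ S (LinearMap.range p)) {T : Type} [AddCommGroup T]
    [Module Λ T] [IsSimpleModule Λ T] (f : M →ₗ[Λ] T) (hf : Function.Surjective f) :
    Nonempty (T ≃ₗ[Λ] S) := by
  rcases eq_bot_or_eq_top (LinearMap.range (f ∘ₗ (LinearMap.ker p).subtype)) with h | h
  · have hle : LinearMap.ker p ≤ LinearMap.ker f := fun x hx =>
      LinearMap.congr_fun (LinearMap.range_eq_bot.1 h) ⟨x, hx⟩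
    refine hrange.nonempty_equiv_of_surjective
      ((LinearMap.ker p).liftQ f hle ∘ₗ p.quotKerEquivRange.symm.toLinearMap) ?_
    have hlift : Function.Surjective ((LinearMap.ker p).liftQ f hle) := by
      rw [← LinearMap.range_eq_top, Submodule.range_liftQ, LinearMap.range_eq_top]
      exact hf
    exact hlift.comp p.quotKerEquivRange.symm.surjective
  · exact hker.nonempty_equiv_of_surjective _ (LinearMap.range_eq_top.1 h)

theorem of_ker_of_range (p : M →ₗ[Λ] Q) (hker : SimpleSubquotientsIso Λ S (LinearMap.ker p))
    (hrange : SimpleSubquotientsIso Λ S (LinearMap.range p)) : SimpleSubquotientsIso Λ S M := by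
  intro W T _ _ hT f hf
  refine nonempty_equiv_of_ker_of_range (p ∘ₗ W.subtype) ?_ ?_ f hf
  · exact hker.of_injective _
      ((LinearMap.injective_restrict_iff (f := W.subtype) fun _ hx => hx).2 (by simp))
  · exact hrange.of_injective _ (Submodule.inclusion_injective (LinearMap.range_comp_le_range _ _))

theorem comap_mkQ_range {t : Submodule Λ M} (ht : SimpleSubquotientsIso Λ S t) {S' : Type}
    [AddCommGroup S'] [Module Λ S'] (hS' : SimpleSubquotientsIso Λ S S') (f : S' →ₗ[Λ] M ⧸ t) :
    SimpleSubquotientsIso Λ S ((LinearMap.range f).comap t.mkQ) := by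
  let X := (LinearMap.range f).comap t.mkQ
  refine of_ker_of_range (t.mkQ ∘ₗ X.subtype) ?_ ?_
  · exact ht.of_injective _ ((LinearMap.injective_restrict_iff (f := X.subtype)
      fun _ hx => (Submodule.Quotient.mk_eq_zero t).1 hx).2 (by simp))
  · have hle : LinearMap.range (t.mkQ ∘ₗ X.subtype) ≤ LinearMap.range f := by
      rw [LinearMap.range_comp, Submodule.range_subtype]
      exact Submodule.map_comap_le _ _
    exact (hS'.of_surjective f.rangeRestrict f.surjective_rangeRestrict).of_injective _
      (Submodule.inclusion_injective hle)

theorem exists_hom_eq_zero [IsNoetherian Λ M] (hS : IsSimpleModule Λ S) :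
    ∃ t : Submodule Λ M, SimpleSubquotientsIso Λ S t ∧ ∀ f : S →ₗ[Λ] M ⧸ t, f = 0 := by
  obtain ⟨t, ht, hmax⟩ := set_has_maximal_iff_noetherian.2 ‹_›
    {X : Submodule Λ M | SimpleSubquotientsIso Λ S X} ⟨⊥, of_subsingleton⟩
  refine ⟨t, ht, fun f => by_contra fun hf => hmax _ (comap_mkQ_range ht (self hS) f) ?_⟩
  refine lt_of_le_of_ne (fun x hx => ?_) fun h => hf ?_
  · rw [Submodule.mem_comap, Submodule.mkQ_apply, (Submodule.Quotient.mk_eq_zero t).2 hx]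
    exact zero_mem _
  · rw [← LinearMap.range_eq_bot, ← Submodule.map_comap_eq_of_surjective t.mkQ_surjective
      (LinearMap.range f), ← h, Submodule.mkQ_map_self]

theorem hom_eq_zero [IsArtinian Λ Q] (h : SimpleSubquotientsIso Λ S M)
    (hQ : ∀ f : S →ₗ[Λ] Q, f = 0) (g : M →ₗ[Λ] Q) : g = 0 := by
  by_contra hg
  obtain ⟨a, ha, hle⟩ := (eq_bot_or_exists_atom_le (LinearMap.range g)).resolve_left
    (LinearMap.range_eq_bot.not.2 hg)
  have := isSimpleModule_iff_isAtom.2 ha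
  obtain ⟨e⟩ := ((h.of_surjective g.rangeRestrict g.surjective_rangeRestrict).of_injective _
    (Submodule.inclusion_injective hle)).nonempty_equiv_of_surjective LinearMap.id
    Function.surjective_id
  refine ha.1 (eq_bot_iff.2 fun x hx => ?_)
  simpa using LinearMap.congr_fun (hQ (a.subtype ∘ₗ e.symm.toLinearMap)) (e ⟨x, hx⟩)

end SimpleSubquotientsIso

end Subquotients

theorem stmt_7 (S : ModuleCat.{0} Λ) (hS : IsSimpleModule Λ S)
    (N : ModuleCat.{0} Λ) (hN : IsFiniteLength Λ N) :
    N ∈ torsionClassOf Λ S ↔ AllFactorsIso Λ S N := by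
  obtain ⟨_, _⟩ := isFiniteLength_iff_isNoetherian_isArtinian.1 hN
  rw [mem_torsionClassOf_iff, allFactorsIso_iff]
  constructor
  · intro hNS
    obtain ⟨t, ht, hSt⟩ := SimpleSubquotientsIso.exists_hom_eq_zero (M := N) hS
    have hfin : IsFiniteLength Λ (N ⧸ t) :=
      isFiniteLength_iff_isNoetherian_isArtinian.2 ⟨inferInstance, inferInstance⟩
    obtain rfl : t = ⊤ := by simpa using congrArg LinearMap.ker (hNS _ hfin hSt t.mkQ)
    exact ht.of_injective Submodule.topEquiv.symm.toLinearMap Submodule.topEquiv.symm.injective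
  · intro h P _ _ hP
    have := (isFiniteLength_iff_isNoetherian_isArtinian.1 hP).2
    exact h.hom_eq_zero
end

section
/- Let Λ be an algebra of finite representation type and let L(Λ) be the union of the semistability sets D(M) over all indecomposable modules M. Then every connected component (compartment) of ℝ^n \ L(Λ) is convex. -/
open Set

private lemma half_lemma {n : ℕ} (f : (Fin n → ℝ) → ℝ) (hlin : IsLinearMap ℝ f)
    (hf : Continuous f) (C' : Set (Fin n → ℝ)) (hO : IsOpen C') (hC : Convex ℝ C')
    (L : Set (Fin n → ℝ)) (x : Fin n → ℝ) (hx : x ∈ C') (hpos : 0 < f x)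
    (hLC : ∀ y ∈ C', y ∈ L ↔ f y = 0)
    (hCsub : connectedComponentIn Lᶜ x ⊆ C') :
    connectedComponentIn Lᶜ x = C' ∩ {y | 0 < f y} := by
  have hxL : x ∈ Lᶜ := by
    simp only [mem_compl_iff, hLC x hx]
    exact ne_of_gt hpos
  have hPconv : Convex ℝ (C' ∩ {y | 0 < f y}) :=
    hC.inter (convex_halfSpace_gt hlin 0)
  apply Subset.antisymm
  · -- C ⊆ P
    intro y hy
    have hyC' : y ∈ C' := hCsub hy
    have hyL : y ∈ Lᶜ := connectedComponentIn_subset _ _ hy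
    have hyne : f y ≠ 0 := fun h => hyL ((hLC y hyC').mpr h)
    refine ⟨hyC', ?_⟩
    -- use preconnectedness to get sign
    have hsub : connectedComponentIn Lᶜ x ⊆ {z | 0 < f z} ∪ {z | f z < 0} := by
      intro z hz
      have hzC' : z ∈ C' := hCsub hz
      have hzL : z ∈ Lᶜ := connectedComponentIn_subset _ _ hz
      have : f z ≠ 0 := fun h => hzL ((hLC z hzC').mpr h)
      rcases this.lt_or_gt with h | h
      · exact Or.inr h
      · exact Or.inl h
    have hor := isPreconnected_connectedComponentIn.subset_or_subset
      (isOpen_lt continuous_const hf) (isOpen_lt hf continuous_const)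
      (by
        rw [Set.disjoint_left]
        intro z hz1 hz2
        simp only [mem_setOf_eq] at hz1 hz2
        exact lt_asymm hz1 hz2) hsub
    rcases hor with h | h
    · exact h hy
    · exact absurd (h (mem_connectedComponentIn hxL)) (not_lt.mpr (le_of_lt hpos))
  · -- P ⊆ C
    refine (hPconv.isPreconnected).subset_connectedComponentIn ⟨hx, hpos⟩ ?_
    intro y hy
    simp only [mem_compl_iff, hLC y hy.1]
    exact ne_of_gt hy.2

private lemma aux_lemma {n : ℕ} : ∀ (N : ℕ) (d : Fin N → (Fin n → ℝ)) (D : Fin N → Set (Fin n → ℝ)),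
    (∀ k, D k ⊆ {x | ∑ i, x i * d k i = 0}) →
    (∀ k, IsClosed (D k)) →
    (∀ k, Convex ℝ (D k)) →
    (∀ k : Fin N, ∀ x ∈ D k, (∀ j < k, x ∉ D j) →
      ∃ ε > 0, ∀ y ∈ Metric.ball x ε, (∑ i, y i * d k i = 0) → y ∈ D k) →
    ∀ x, x ∉ (⋃ k, D k) → Convex ℝ (connectedComponentIn (⋃ k, D k)ᶜ x) := by
  intro N
  induction N with
  | zero =>
    intro d D hDH hclosed hconv hrelopen x hx
    have h1 : (⋃ k : Fin 0, D k) = (∅ : Set (Fin n → ℝ)) := by simp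
    rw [h1, compl_empty, connectedComponentIn_univ]
    have : connectedComponent x = univ := PreconnectedSpace.connectedComponent_eq_univ x
    rw [this]; exact convex_univ
  | succ N ih =>
    intro d D hDH hclosed hconv hrelopen x hx
    -- split off the last wall
    set L' : Set (Fin n → ℝ) := ⋃ k : Fin N, D (Fin.castSucc k) with hL'def
    have hUnion : (⋃ k : Fin (N+1), D k) = L' ∪ D (Fin.last N) := by
      ext y
      simp only [mem_iUnion, mem_union, hL'def]
      constructor
      · rintro ⟨k, hk⟩
        rcases Fin.eq_castSucc_or_eq_last k with ⟨k', rfl⟩ | rfl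
        · exact Or.inl ⟨k', hk⟩
        · exact Or.inr hk
      · rintro (⟨k', hk⟩ | hk)
        · exact ⟨_, hk⟩
        · exact ⟨_, hk⟩
    have hL'closed : IsClosed L' := isClosed_iUnion_of_finite (fun k => hclosed _)
    have hxL' : x ∉ L' := by
      intro h; apply hx; rw [hUnion]; exact Or.inl h
    -- inductive hypothesis applied to first N walls
    have hC'conv : Convex ℝ (connectedComponentIn L'ᶜ x) := by
      apply ih (fun k => d (Fin.castSucc k)) (fun k => D (Fin.castSucc k))
        (fun k => hDH _) (fun k => hclosed _) (fun k => hconv _)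
      · intro k y hy hlt
        apply hrelopen (Fin.castSucc k) y hy
        intro j hj
        have hj' : (j : ℕ) < (k : ℕ) := hj
        have hjN : (j : ℕ) < N := lt_trans hj' k.isLt
        have hje : j = Fin.castSucc ⟨(j : ℕ), hjN⟩ := by
          apply Fin.ext
          simp
        rw [hje]
        exact hlt ⟨(j : ℕ), hjN⟩ (by simpa [Fin.lt_def] using hj')
      · exact hxL'
    set C' := connectedComponentIn L'ᶜ x with hC'def
    have hC'open : IsOpen C' := hL'closed.isOpen_compl.connectedComponentIn
    have hxC' : x ∈ C' := mem_connectedComponentIn hxL'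
    have hC'L' : C' ⊆ L'ᶜ := connectedComponentIn_subset _ _
    set L : Set (Fin n → ℝ) := ⋃ k : Fin (N+1), D k with hLdef
    have hLsplit : L = L' ∪ D (Fin.last N) := hUnion
    have hCsubC' : connectedComponentIn Lᶜ x ⊆ C' := by
      apply connectedComponentIn_mono
      rw [hLsplit]
      exact compl_subset_compl.mpr subset_union_left
    by_cases hmeet : (D (Fin.last N) ∩ C').Nonempty
    · -- Case B : the last wall crosses C'; then H ∩ C' ⊆ D (last)
      set f : (Fin n → ℝ) → ℝ := fun y => ∑ i, y i * d (Fin.last N) i with hfdef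
      have hflin : IsLinearMap ℝ f := by
        constructor
        · intro a b
          simp only [hfdef, Pi.add_apply, add_mul, Finset.sum_add_distrib]
        · intro c a
          simp only [hfdef, Pi.smul_apply, smul_eq_mul, Finset.mul_sum, mul_assoc]
      have hfcont : Continuous f := by
        apply continuous_finset_sum
        intro i _
        exact (continuous_apply i).mul continuous_const
      have hHsub : ∀ y ∈ C', f y = 0 → y ∈ D (Fin.last N) := by
        -- clopen argument on the convex set H ∩ C'
        set S : Set (Fin n → ℝ) := {y | f y = 0} ∩ C' with hSdef
        have hSconv : Convex ℝ S := by
          apply Convex.inter _ hC'conv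
          exact (convex_hyperplane hflin 0)
        obtain ⟨z, hzD, hzC⟩ := hmeet
        have hzS : z ∈ S := ⟨hDH _ hzD, hzC⟩
        have hSpre : IsPreconnected S := hSconv.isPreconnected
        haveI : PreconnectedSpace S := Subtype.preconnectedSpace hSpre
        set A : Set S := {y : S | (y : Fin n → ℝ) ∈ D (Fin.last N)} with hAdef
        have hAclosed : IsClosed A := (hclosed (Fin.last N)).preimage continuous_subtype_val
        have hAopen : IsOpen A := by
          rw [Metric.isOpen_iff]
          rintro ⟨y, hyH, hyC⟩ hyA
          have hynot : ∀ j < Fin.last N, y ∉ D j := by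
            intro j hj
            obtain ⟨j', rfl⟩ : ∃ j' : Fin N, j = Fin.castSucc j' := by
              rcases Fin.eq_castSucc_or_eq_last j with h | rfl
              · exact h
              · exact absurd hj (lt_irrefl _)
            intro hmem
            exact (hC'L' hyC) (mem_iUnion.mpr ⟨j', hmem⟩)
          obtain ⟨ε, hε, hball⟩ := hrelopen (Fin.last N) y hyA hynot
          -- also stay inside C'
          obtain ⟨ε', hε', hball'⟩ := Metric.isOpen_iff.mp hC'open y hyC
          refine ⟨min ε ε', lt_min hε hε', ?_⟩
          rintro ⟨w, hwH, hwC⟩ hw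
          rw [Metric.mem_ball, Subtype.dist_eq] at hw
          exact hball w (Metric.mem_ball.mpr (lt_of_lt_of_le hw (min_le_left _ _))) hwH
        have hAne : A.Nonempty := ⟨⟨z, hzS⟩, hzD⟩
        have : A = univ := IsClopen.eq_univ ⟨hAclosed, hAopen⟩ hAne
        intro y hyC hyf
        have : (⟨y, hyf, hyC⟩ : S) ∈ A := by rw [this]; trivial
        exact this
      have hLC : ∀ y ∈ C', y ∈ L ↔ f y = 0 := by
        intro y hyC
        constructor
        · intro hyL
          rw [hLsplit] at hyL
          rcases hyL with h | h
          · exact absurd h (hC'L' hyC)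
          · exact hDH _ h
        · intro hyf
          rw [hLsplit]
          exact Or.inr (hHsub y hyC hyf)
      have hfx : f x ≠ 0 := by
        intro h
        exact hx ((hLC x hxC').mpr h)
      have hfneglin : IsLinearMap ℝ (fun y => -f y) := by
        constructor
        · intro a b; rw [hflin.map_add]; ring
        · intro c a; rw [hflin.map_smul]; simp [smul_eq_mul, mul_neg]
      rcases hfx.lt_or_gt with hneg | hpos
      · have := half_lemma (fun y => -f y) hfneglin (hfcont.neg) C' hC'open hC'conv L x hxC'
          (by simpa using hneg) (by intro y hy; rw [hLC y hy]; simp) hCsubC'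
        rw [this]
        exact hC'conv.inter (convex_halfSpace_gt hfneglin 0)
      · have := half_lemma f hflin hfcont C' hC'open hC'conv L x hxC' hpos hLC hCsubC'
        rw [this]
        exact hC'conv.inter (convex_halfSpace_gt hflin 0)
    · -- Case A : last wall misses C'; component is unchanged
      have hC'L : C' ⊆ Lᶜ := by
        intro y hy
        rw [hLsplit]
        rintro (h | h)
        · exact (hC'L' hy) h
        · exact hmeet ⟨y, h, hy⟩
      have h1 : C' ⊆ connectedComponentIn Lᶜ x :=
        (isPreconnected_connectedComponentIn).subset_connectedComponentIn hxC' hC'L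
      have : connectedComponentIn Lᶜ x = C' := Subset.antisymm hCsubC' h1
      rw [this]; exact hC'conv


/-- Let `Λ` be an algebra of finite representation type and let
`L(Λ)` be the union of the semistability sets `D(M)` over (the finitely many)
indecomposable modules `M₁, ..., M_N`, ordered so that the first `n` are the
simple modules, whose walls `D(Sᵢ) = H(Sᵢ)` are the coordinate hyperplanes.
Each `D(Mₖ)` is a closed convex subset of the hyperplane
`H(Mₖ) = {x | x · dim Mₖ = 0}` whose relative boundary is contained in the union
of the earlier walls (walls are ordered by length, and `∂D(M)` lies in the union
of the `D(M')` for `M'` of smaller length).  Then every connected component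
(compartment) of `ℝ^n \ L(Λ)` is convex. -/
theorem stmt_14 (n N : ℕ) (hn : n ≤ N)
    (d : Fin N → (Fin n → ℝ)) (D : Fin N → Set (Fin n → ℝ))
    (hd : ∀ k, d k ≠ 0)
    (hDH : ∀ k, D k ⊆ {x | ∑ i, x i * d k i = 0})
    (hclosed : ∀ k, IsClosed (D k))
    (hconv : ∀ k, Convex ℝ (D k))
    (hsimple : ∀ i : Fin n, D (Fin.castLE hn i) = {x | x i = 0})
    (hrelopen : ∀ k : Fin N, ∀ x ∈ D k, (∀ j < k, x ∉ D j) →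
      ∃ ε > 0, ∀ y ∈ Metric.ball x ε, (∑ i, y i * d k i = 0) → y ∈ D k)
    (x : Fin n → ℝ) (hx : x ∉ ⋃ k, D k) :
    Convex ℝ (connectedComponentIn (⋃ k, D k)ᶜ x) := by
  exact aux_lemma N d D hDH hclosed hconv hrelopen x hx
end

section
/- Let Λ be of finite representation type with the walls D(M) ordered by the length of M, and set L_k(Λ) = D(M_1) ∪ ... ∪ D(M_k). If U is a convex component of ℝ^n \ L_k(Λ), then U ∩ D(M_{k+1}) is either empty or equal to U ∩ H(M_{k+1}); consequently U \ D(M_{k+1}) is a disjoint union of at most two convex open sets. -/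
/-- Let `Λ` be of finite representation type with walls ordered by
length, `L_k(Λ) = D(M_1) ∪ ⋯ ∪ D(M_k)`, and let `U` be a convex (open) component
of `ℝ^n \ L_k(Λ)`.  Let `D = D(M_{k+1})` be the next wall: a closed subset of
the hyperplane `H = H(M_{k+1}) = {x | x · dim M_{k+1} = 0}` which is relatively
open in `H` away from `L_k(Λ)` (its relative boundary lies in `L_k(Λ)`).
Then `U ∩ D` is either empty or equal to `U ∩ H`; consequently `U \ D` is a
disjoint union of at most two convex open sets. -/
theorem stmt_19 (n : ℕ) (L : Set (Fin n → ℝ)) (hL : IsClosed L)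
    (d : Fin n → ℝ) (hd : d ≠ 0)
    (D : Set (Fin n → ℝ)) (hDclosed : IsClosed D)
    (hDH : D ⊆ {x | ∑ i, x i * d i = 0})
    (hrelopen : ∀ x ∈ D, x ∉ L →
      ∃ ε > 0, ∀ y ∈ Metric.ball x ε, (∑ i, y i * d i = 0) → y ∈ D)
    (U : Set (Fin n → ℝ)) (hUopen : IsOpen U) (hUconv : Convex ℝ U)
    (hUconn : IsConnected U) (hUL : U ∩ L = ∅) :
    (U ∩ D = ∅ ∨ U ∩ D = U ∩ {x | ∑ i, x i * d i = 0}) ∧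
    ∃ V₁ V₂ : Set (Fin n → ℝ),
      IsOpen V₁ ∧ IsOpen V₂ ∧ Convex ℝ V₁ ∧ Convex ℝ V₂ ∧
      Disjoint V₁ V₂ ∧ U \ D = V₁ ∪ V₂ := by
  set f : (Fin n → ℝ) → ℝ := fun x => ∑ i, x i * d i with hf
  have hlin : IsLinearMap ℝ f := by
    constructor
    · intro x y
      simp [hf, add_mul, Finset.sum_add_distrib]
    · intro c x
      simp [hf, Finset.mul_sum, mul_assoc]
  have hcont : Continuous f := by
    apply continuous_finset_sum
    intro i _
    exact (continuous_apply i).mul continuous_const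
  have hnotL : ∀ x ∈ U, x ∉ L := by
    intro x hxU hxL
    have : x ∈ U ∩ L := ⟨hxU, hxL⟩
    simp [hUL] at this
  -- First part
  have main : U ∩ D = ∅ ∨ U ∩ D = U ∩ {x | f x = 0} := by
    by_cases hT : U ∩ D = ∅
    · exact Or.inl hT
    · right
      obtain ⟨x0, hx0⟩ := Set.nonempty_iff_ne_empty.mpr hT
      have key : ∀ x ∈ U ∩ D, ∃ ε > 0, ∀ y ∈ Metric.ball x ε, f y = 0 → y ∈ D := by
        intro x hx
        exact hrelopen x hx.2 (hnotL x hx.1)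
      choose! ε hεpos hεball using key
      set W : Set (Fin n → ℝ) := ⋃ x ∈ U ∩ D, Metric.ball x (ε x) with hW
      have hWopen : IsOpen W := isOpen_biUnion fun _ _ => Metric.isOpen_ball
      set S : Set (Fin n → ℝ) := U ∩ {x | f x = 0} with hS
      have hSconv : Convex ℝ S := hUconv.inter (convex_hyperplane hlin 0)
      have hSpre : IsPreconnected S := hSconv.isPreconnected
      apply Set.eq_of_subset_of_subset
      · exact fun x hx => ⟨hx.1, hDH hx.2⟩
      · -- S ⊆ U ∩ D
        by_contra hcon
        obtain ⟨y, hyS, hyn⟩ := Set.not_subset.mp hcon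
        have hyD : y ∉ D := fun h => hyn ⟨hyS.1, h⟩
        have hcover : S ⊆ W ∪ Dᶜ := by
          intro s hsS
          by_cases hsD : s ∈ D
          · left
            exact Set.mem_biUnion ⟨hsS.1, hsD⟩
              (Metric.mem_ball_self (hεpos s ⟨hsS.1, hsD⟩))
          · exact Or.inr hsD
        have hx0S : x0 ∈ S := ⟨hx0.1, hDH hx0.2⟩
        have hx0W : x0 ∈ W := Set.mem_biUnion hx0 (Metric.mem_ball_self (hεpos x0 hx0))
        obtain ⟨z, hzS, hzW, hzD⟩ := hSpre W Dᶜ hWopen hDclosed.isOpen_compl hcover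
          ⟨x0, hx0S, hx0W⟩ ⟨y, hyS, hyD⟩
        obtain ⟨x, hx, hzball⟩ := Set.mem_iUnion₂.mp hzW
        exact hzD (hεball x hx z hzball hzS.2)
  refine ⟨main, ?_⟩
  rcases main with h | h
  · refine ⟨U, ∅, hUopen, isOpen_empty, hUconv, convex_empty, Set.disjoint_empty _, ?_⟩
    rw [Set.union_empty]
    apply Set.eq_of_subset_of_subset (Set.diff_subset)
    intro x hx
    refine ⟨hx, fun hxD => ?_⟩
    have : x ∈ U ∩ D := ⟨hx, hxD⟩
    simp [h] at this
  · refine ⟨U ∩ {x | f x < 0}, U ∩ {x | 0 < f x}, ?_, ?_, ?_, ?_, ?_, ?_⟩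
    · exact hUopen.inter (isOpen_lt hcont continuous_const)
    · exact hUopen.inter (isOpen_lt continuous_const hcont)
    · exact hUconv.inter (convex_halfSpace_lt hlin 0)
    · exact hUconv.inter (convex_halfSpace_gt hlin 0)
    · refine Set.disjoint_left.mpr fun x hx1 hx2 => ?_
      exact absurd hx2.2 (not_lt.mpr (le_of_lt hx1.2 : f x ≤ 0))
    · ext x
      constructor
      · rintro ⟨hxU, hxD⟩
        have hne : f x ≠ 0 := fun h0 => hxD (by
          have : x ∈ U ∩ D := h ▸ ⟨hxU, h0⟩
          exact this.2)
        rcases lt_or_gt_of_ne hne with hlt | hgt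
        · exact Or.inl ⟨hxU, hlt⟩
        · exact Or.inr ⟨hxU, hgt⟩
      · rintro (⟨hxU, hlt⟩ | ⟨hxU, hgt⟩) <;>
          refine ⟨hxU, fun hxD => ?_⟩
        · exact absurd (hDH hxD) (ne_of_lt hlt)
        · exact absurd (hDH hxD) (ne_of_gt hgt)
end
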